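/- (Theorem 2, estimate.) Assume h(τ) > 0, let q > 1, define ζ(t) := [h(τ)·ν(τ) + ∫_τ^t β(ξ)·ν(ξ) dξ]/ν(t) for t ≥ τ, and assume α(t)·σ(t)^p·(q·ζ(t))^p ≤ (q−1)·β(t) for all t ≥ τ. Then ‖u(t)‖ ≤ q·ζ(t) for all t ≥ τ. -/

import Mathlib

/-!
Two comparisons. First, `‖u‖` is a subsolution of the scalar delay equation solved by `h`
(`‖u‖ (‖u‖)' = Re⟪u, u̇⟫`), so `‖u‖ ≤ h` by a Grönwall-type comparison applied on successive
intervals of length `τ`. Second, `h ν` is nondecreasing, whence `h(t - τ) ≤ σ(t) h(t)`; as long as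
`h ≤ q ζ`, the hypothesis on `α` then bounds the delayed term by `(q - 1) β`, so `h ν - q ζ ν`
is nonincreasing. It starts negative (`h(τ) < q h(τ) = q ζ(τ)`), hence never reaches `0`.
-/

open Real MeasureTheory Set Filter ComplexInnerProductSpace

/-- `ν(t) = exp(−∫₀ᵗ γ(ξ) dξ)`. -/
noncomputable def nu (γ : ℝ → ℝ) (t : ℝ) : ℝ := Real.exp (-∫ ξ in (0:ℝ)..t, γ ξ)

/-- `σ(t) = exp(−∫_{t−τ}^t γ(ξ) dξ)`. -/
noncomputable def sig (γ : ℝ → ℝ) (τ t : ℝ) : ℝ :=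
  Real.exp (-∫ ξ in (t - τ)..t, γ ξ)

theorem image_le_of_deriv_right_le_add_mul_sub {f f' g g' c : ℝ → ℝ} {a b : ℝ}
    (hf : ContinuousOn f (Icc a b)) (hf' : ∀ x ∈ Ico a b, HasDerivWithinAt f (f' x) (Ici x) x)
    (hg : ContinuousOn g (Icc a b)) (hg' : ∀ x ∈ Ico a b, HasDerivWithinAt g (g' x) (Ici x) x)
    (ha : f a ≤ g a) (hc : BddAbove (c '' Ico a b))
    (bound : ∀ x ∈ Ico a b, g x < f x → f' x ≤ g' x + c x * (f x - g x)) :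
    ∀ ⦃x⦄, x ∈ Icc a b → f x ≤ g x := by
  obtain ⟨K, hK⟩ := hc
  -- compare `f` with `g + ε e^{(K + 1)(x - a)}`, whose excess over `g` grows faster than `c` allows
  have hε : ∀ ε > 0, ∀ x ∈ Icc a b, f x ≤ g x + ε * exp ((K + 1) * (x - a)) := by
    intro ε hε
    have hE : ∀ x, HasDerivAt (fun y => ε * exp ((K + 1) * (y - a)))
        (ε * exp ((K + 1) * (x - a)) * (K + 1)) x := fun x => by
      simpa [mul_assoc] using
        (((hasDerivAt_id x).sub_const a).const_mul (K + 1)).exp.const_mul ε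
    refine image_le_of_deriv_right_lt_deriv_boundary' hf hf'
      (by simp only [sub_self, mul_zero, exp_zero, mul_one]; linarith) (hg.add (by fun_prop))
      (fun x hx => (hg' x hx).add (hE x).hasDerivWithinAt) fun x hx hfx => ?_
    have hpos : 0 < ε * exp ((K + 1) * (x - a)) := by positivity
    have hcx : c x ≤ K := hK (mem_image_of_mem c hx)
    calc f' x ≤ g' x + c x * (f x - g x) := bound x hx (by linarith)
      _ < g' x + ε * exp ((K + 1) * (x - a)) * (K + 1) := by
        rw [hfx, add_sub_cancel_left]
        nlinarith [mul_le_mul_of_nonneg_right hcx hpos.le]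
  intro x hx
  refine le_of_forall_pos_le_add fun δ hδ => ?_
  have hpos : 0 < exp ((K + 1) * (x - a)) := exp_pos _
  simpa [div_mul_cancel₀ _ hpos.ne'] using hε (δ / exp ((K + 1) * (x - a))) (by positivity) x hx

theorem forall_of_forall_Icc_add {τ : ℝ} (hτ : 0 < τ) {P : ℝ → Prop}
    (h₀ : ∀ t ∈ Icc (-τ) 0, P t)
    (step : ∀ a, 0 ≤ a → (∀ t ∈ Icc (-τ) a, P t) → ∀ t ∈ Icc a (a + τ), P t) :
    ∀ t, -τ ≤ t → P t := by
  have hk : ∀ k : ℕ, ∀ t ∈ Icc (-τ) (k * τ), P t := by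
    intro k
    induction k with
    | zero => simpa using h₀
    | succ k ih =>
      intro t ht
      rcases le_or_gt t (k * τ) with htk | htk
      · exact ih t ⟨ht.1, htk⟩
      · exact step (k * τ) (by positivity) ih t ⟨htk.le, by push_cast at ht; linarith [ht.2]⟩
  intro t ht
  obtain ⟨k, hk'⟩ := exists_nat_ge (t / τ)
  exact hk k t ⟨ht, (div_le_iff₀ hτ).1 hk'⟩

theorem neg_of_hasDerivAt_nonpos_of_neg {w w' : ℝ → ℝ} {a : ℝ}
    (hc : ContinuousOn w (Ici a)) (hd : ∀ x, a < x → HasDerivAt w (w' x) x) (ha : w a < 0)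
    (hw' : ∀ x, a < x → w x < 0 → w' x ≤ 0) : ∀ x, a ≤ x → w x < 0 := by
  by_contra! ⟨b, hab, hb⟩
  set S := Icc a b ∩ w ⁻¹' Ici 0
  have hS : IsClosed S := (hc.mono Icc_subset_Ici_self).preimage_isClosed_of_isClosed isClosed_Icc
    isClosed_Ici
  have hSb : BddBelow S := ⟨a, fun x hx => hx.1.1⟩
  have hmem : sInf S ∈ S := hS.csInf_mem ⟨b, ⟨hab, le_rfl⟩, hb⟩ hSb
  have hbefore : ∀ x ∈ Ico a (sInf S), w x < 0 := fun x hx => by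
    by_contra! hx'
    exact (csInf_le hSb ⟨⟨hx.1, hx.2.le.trans hmem.1.2⟩, hx'⟩).not_gt hx.2
  have hlt : a < sInf S := hmem.1.1.lt_of_ne fun h => (h ▸ hmem.2 : 0 ≤ w a).not_gt ha
  have hanti : AntitoneOn w (Icc a (sInf S)) := by
    refine antitoneOn_of_hasDerivWithinAt_nonpos (f' := w') (convex_Icc _ _)
      (hc.mono Icc_subset_Ici_self) (fun x hx => ?_) fun x hx => ?_ <;> rw [interior_Icc] at hx
    · exact (hd x hx.1).hasDerivWithinAt
    · exact hw' x hx.1 (hbefore x ⟨hx.1.le, hx.2⟩)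
  have := hanti (left_mem_Icc.2 hlt.le) (right_mem_Icc.2 hlt.le) hlt.le
  exact (hmem.2.trans this).not_gt ha

theorem norm_mul_eq_re_inner_of_hasDerivWithinAt {𝕜 E : Type*} [RCLike 𝕜]
    [NormedAddCommGroup E] [InnerProductSpace 𝕜 E] [NormedSpace ℝ E]
    {u : ℝ → E} {u' : E} {n' : ℝ} {s : Set ℝ} {t : ℝ}
    (hu : HasDerivWithinAt u u' s t) (hn : HasDerivWithinAt (fun x => ‖u x‖) n' s t)
    (hs : UniqueDiffWithinAt ℝ s t) :
    ‖u t‖ * n' = RCLike.re (inner 𝕜 (u t) u') := by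
  have hsq : HasDerivWithinAt (fun x => ‖u x‖ ^ 2) (2 * RCLike.re (inner 𝕜 (u t) u')) s t := by
    have hre := (RCLike.reCLM (K := 𝕜)).hasFDerivAt.comp_hasDerivWithinAt t (hu.inner 𝕜 hu)
    have hfun : (RCLike.reCLM ∘ fun x => inner 𝕜 (u x) (u x)) = fun x => ‖u x‖ ^ 2 := by
      funext x; simp
    rw [hfun, RCLike.reCLM_apply, map_add, inner_re_symm (𝕜 := 𝕜) u' (u t)] at hre
    rwa [two_mul]
  have := ((hn.fun_pow 2).derivWithin hs).symm.trans (hsq.derivWithin hs)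
  simp only [Nat.cast_ofNat, Nat.add_one_sub_one, pow_one] at this
  linarith

theorem nu_pos (γ : ℝ → ℝ) (t : ℝ) : 0 < nu γ t := exp_pos _

theorem sig_pos (γ : ℝ → ℝ) (τ t : ℝ) : 0 < sig γ τ t := exp_pos _

theorem hasDerivAt_nu {γ : ℝ → ℝ} (hγ : Continuous γ) (t : ℝ) :
    HasDerivAt (nu γ) (-γ t * nu γ t) t := by
  unfold nu
  simpa [mul_comm] using ((hγ.integral_hasStrictDerivAt 0 t).hasDerivAt.neg.exp)

theorem continuous_nu {γ : ℝ → ℝ} (hγ : Continuous γ) : Continuous (nu γ) :=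
  continuous_iff_continuousAt.2 fun t => (hasDerivAt_nu hγ t).continuousAt

theorem HasDerivAt.mul_nu {γ h : ℝ → ℝ} {h' t : ℝ} (hγ : Continuous γ) (hh : HasDerivAt h h' t) :
    HasDerivAt (fun s => h s * nu γ s) ((h' - γ t * h t) * nu γ t) t :=
  (hh.mul (hasDerivAt_nu hγ t)).congr_deriv (by ring)

theorem nu_eq_nu_sub_mul_sig {γ : ℝ → ℝ} (hγ : Continuous γ) (τ t : ℝ) :
    nu γ t = nu γ (t - τ) * sig γ τ t := by
  rw [nu, nu, sig, ← exp_add, ← neg_add, intervalIntegral.integral_add_adjacent_intervals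
    (hγ.intervalIntegrable _ _) (hγ.intervalIntegrable _ _)]

theorem monotoneOn_mul_nu {γ h h' : ℝ → ℝ} {a : ℝ} (hγ : Continuous γ)
    (hc : ContinuousOn h (Ici a)) (hd : ∀ t, a < t → HasDerivAt h (h' t) t)
    (hle : ∀ t, a < t → γ t * h t ≤ h' t) : MonotoneOn (fun t => h t * nu γ t) (Ici a) := by
  refine monotoneOn_of_hasDerivWithinAt_nonneg
    (f' := fun t => (h' t - γ t * h t) * nu γ t) (convex_Ici a)
    (hc.mul fun t _ => (hasDerivAt_nu hγ t).continuousAt.continuousWithinAt)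
    (fun t ht => ?_) fun t ht => ?_ <;> rw [interior_Ici] at ht
  · exact ((hd t ht).mul_nu hγ).hasDerivWithinAt
  · exact mul_nonneg (sub_nonneg.2 (hle t ht)) (nu_pos γ t).le

theorem delay_le_sig_mul_of_monotoneOn {γ h : ℝ → ℝ} {a τ : ℝ} (hγ : Continuous γ) (hτ : 0 ≤ τ)
    (hmono : MonotoneOn (fun t => h t * nu γ t) (Ici a)) {t : ℝ} (ht : a + τ ≤ t) :
    h (t - τ) ≤ sig γ τ t * h t := by
  have := hmono (show a ≤ t - τ by linarith) (show a ≤ t by linarith) (by linarith)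
  simp only [nu_eq_nu_sub_mul_sig hγ τ t] at this
  have := nu_pos γ (t - τ)
  nlinarith

theorem le_of_delay_comparison {τ p : ℝ} (hτ : 0 < τ) (hp : 0 ≤ p) {γ α β f f' g g' : ℝ → ℝ}
    (hγ : Continuous γ) (hα : ∀ t, 0 ≤ α t) (hf0 : ∀ t, 0 ≤ f t)
    (hfc : ContinuousOn f (Ici (-τ))) (hfd : ∀ t, 0 ≤ t → HasDerivWithinAt f (f' t) (Ici t) t)
    (hgc : ContinuousOn g (Ici (-τ))) (hgd : ∀ t, 0 ≤ t → HasDerivWithinAt g (g' t) (Ici t) t)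
    (hf' : ∀ t, 0 ≤ t → g t < f t → f' t ≤ γ t * f t + α t * f (t - τ) ^ p + β t)
    (hg' : ∀ t, 0 ≤ t → g' t = γ t * g t + α t * g (t - τ) ^ p + β t)
    (hinit : ∀ t ∈ Icc (-τ) 0, f t ≤ g t) : ∀ t, -τ ≤ t → f t ≤ g t := by
  refine forall_of_forall_Icc_add hτ hinit fun a ha ih => ?_
  have hsub : Icc a (a + τ) ⊆ Ici (-τ) := fun x hx => by simp only [mem_Ici]; linarith [hx.1]
  refine image_le_of_deriv_right_le_add_mul_sub (c := γ) (hfc.mono hsub)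
    (fun x hx => hfd x (ha.trans hx.1)) (hgc.mono hsub) (fun x hx => hgd x (ha.trans hx.1))
    (ih a ⟨by linarith, le_rfl⟩)
    ((isCompact_Icc.bddAbove_image hγ.continuousOn).mono (image_mono Ico_subset_Icc_self))
    fun x hx hgf => ?_
  have hx0 : 0 ≤ x := ha.trans hx.1
  have hdelay : f (x - τ) ^ p ≤ g (x - τ) ^ p :=
    rpow_le_rpow (hf0 _) (ih _ ⟨by linarith [hx.1], by linarith [hx.2]⟩) hp
  calc f' x ≤ γ x * f x + α x * f (x - τ) ^ p + β x := hf' x hx0 hgf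
    _ ≤ γ x * f x + α x * g (x - τ) ^ p + β x := by gcongr; exact hα x
    _ = g' x + γ x * (f x - g x) := by rw [hg' x hx0]; ring

theorem norm_le_of_delay_comparison {𝕜 E : Type*} [RCLike 𝕜]
    [NormedAddCommGroup E] [InnerProductSpace 𝕜 E] [NormedSpace ℝ E]
    {τ p : ℝ} (hτ : 0 < τ) (hp : 0 ≤ p) {γ α β h h' : ℝ → ℝ} {u u' : ℝ → E}
    (hγ : Continuous γ) (hα : ∀ t, 0 ≤ α t) (huc : ContinuousOn u (Ici (-τ)))
    (hud : ∀ t, 0 ≤ t → HasDerivWithinAt u (u' t) (Ici 0) t)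
    (hnd : ∀ t, 0 ≤ t → DifferentiableWithinAt ℝ (fun s => ‖u s‖) (Ici 0) t)
    (huineq : ∀ t, 0 ≤ t → RCLike.re (inner 𝕜 (u t) (u' t)) ≤
      γ t * ‖u t‖ ^ 2 + α t * ‖u t‖ * ‖u (t - τ)‖ ^ p + β t * ‖u t‖)
    (hh0 : ∀ t, 0 ≤ t → 0 ≤ h t) (hhc : ContinuousOn h (Ici (-τ)))
    (hhd : ∀ t, 0 ≤ t → HasDerivWithinAt h (h' t) (Ici 0) t)
    (hheq : ∀ t, 0 ≤ t → h' t = γ t * h t + α t * h (t - τ) ^ p + β t)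
    (hinit : ∀ t, -τ ≤ t → t ≤ 0 → h t = ‖u t‖) : ∀ t, -τ ≤ t → ‖u t‖ ≤ h t := by
  refine le_of_delay_comparison hτ hp hγ hα (fun _ => norm_nonneg _) huc.norm
    (fun t ht => (hnd t ht).hasDerivWithinAt.mono (Ici_subset_Ici.2 ht)) hhc
    (fun t ht => (hhd t ht).mono (Ici_subset_Ici.2 ht)) (fun t ht hlt => ?_) hheq
    fun t ht => (hinit t ht.1 ht.2).ge
  have hpos : 0 < ‖u t‖ := (hh0 t ht).trans_lt hlt
  refine le_of_mul_le_mul_left ?_ hpos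
  calc ‖u t‖ * derivWithin (fun s => ‖u s‖) (Ici 0) t = RCLike.re (inner 𝕜 (u t) (u' t)) :=
        norm_mul_eq_re_inner_of_hasDerivWithinAt (hud t ht) (hnd t ht).hasDerivWithinAt
          (uniqueDiffOn_Ici 0 t ht)
    _ ≤ _ := huineq t ht
    _ = _ := by ring

theorem delay_le_sig_mul {τ p : ℝ} (hτ : 0 ≤ τ) {γ α β h h' : ℝ → ℝ} (hγ : Continuous γ)
    (hα : ∀ t, 0 ≤ α t) (hβ : ∀ t, 0 ≤ β t) (hh0 : ∀ t, -τ ≤ t → 0 ≤ h t)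
    (hhc : ContinuousOn h (Ici 0)) (hhd : ∀ t, 0 ≤ t → HasDerivWithinAt h (h' t) (Ici 0) t)
    (hheq : ∀ t, 0 ≤ t → h' t = γ t * h t + α t * h (t - τ) ^ p + β t) {t : ℝ} (ht : τ ≤ t) :
    h (t - τ) ≤ sig γ τ t * h t := by
  refine delay_le_sig_mul_of_monotoneOn hγ hτ (a := 0) ?_ (by linarith)
  refine monotoneOn_mul_nu hγ hhc (fun s hs => (hhd s hs.le).hasDerivAt (Ici_mem_nhds hs))
    fun s hs => ?_
  have := rpow_nonneg (hh0 (s - τ) (by linarith)) p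
  rw [hheq s hs.le]; nlinarith [hα s, hβ s]

theorem le_mul_of_delay_bound {τ p q : ℝ} (hτ : 0 < τ) (hp : 0 ≤ p) (hq : 1 < q)
    {γ α β h h' ζ : ℝ → ℝ} (hγ : Continuous γ) (hβc : Continuous β)
    (hα : ∀ t, 0 ≤ α t) (hβ : ∀ t, 0 ≤ β t) (hh0 : ∀ t, -τ ≤ t → 0 ≤ h t)
    (hhc : ContinuousOn h (Ici 0)) (hhd : ∀ t, 0 ≤ t → HasDerivWithinAt h (h' t) (Ici 0) t)
    (hheq : ∀ t, 0 ≤ t → h' t = γ t * h t + α t * h (t - τ) ^ p + β t) (hhτ : 0 < h τ)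
    (hζ : ∀ t, τ ≤ t → ζ t = (h τ * nu γ τ + ∫ ξ in τ..t, β ξ * nu γ ξ) / nu γ t)
    (hcond : ∀ t, τ ≤ t → α t * sig γ τ t ^ p * (q * ζ t) ^ p ≤ (q - 1) * β t) :
    ∀ t, τ ≤ t → h t ≤ q * ζ t := by
  -- `Z = ζ ν` is a primitive of `β ν`, so `h < q ζ` amounts to `w = h ν - q Z < 0`
  set Z : ℝ → ℝ := fun t => h τ * nu γ τ + ∫ ξ in τ..t, β ξ * nu γ ξ
  set w : ℝ → ℝ := fun t => h t * nu γ t - q * Z t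
  have hZ : ∀ t, HasDerivAt Z (β t * nu γ t) t := fun t =>
    (((hβc.mul (continuous_nu hγ)).integral_hasStrictDerivAt τ t).hasDerivAt).const_add _
  have hw : ∀ t, τ < t →
      HasDerivAt w ((h' t - γ t * h t) * nu γ t - q * (β t * nu γ t)) t := fun t ht =>
    (((hhd t (by linarith)).hasDerivAt (Ici_mem_nhds (hτ.trans ht))).mul_nu hγ).sub
      ((hZ t).const_mul q)
  have hw_neg_iff : ∀ t, τ ≤ t → (w t < 0 ↔ h t < q * ζ t) := fun t ht => by
    rw [hζ t ht, sub_neg, ← mul_div_assoc, lt_div_iff₀ (nu_pos γ t)]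
  have hw' : ∀ t, τ < t → w t < 0 → (h' t - γ t * h t) * nu γ t - q * (β t * nu γ t) ≤ 0 := by
    intro t ht hwt
    have hζt := (hw_neg_iff t ht.le).1 hwt
    have hqζ : 0 ≤ q * ζ t := (hh0 t (by linarith)).trans hζt.le
    have hdelay : h (t - τ) ≤ sig γ τ t * (q * ζ t) :=
      (delay_le_sig_mul hτ.le hγ hα hβ hh0 hhc hhd hheq ht.le).trans
        (mul_le_mul_of_nonneg_left hζt.le (sig_pos γ τ t).le)
    have hα' : α t * h (t - τ) ^ p ≤ (q - 1) * β t := calc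
      α t * h (t - τ) ^ p ≤ α t * (sig γ τ t * (q * ζ t)) ^ p := by
        gcongr; exacts [hα t, hh0 _ (by linarith)]
      _ = α t * sig γ τ t ^ p * (q * ζ t) ^ p := by rw [mul_rpow (sig_pos γ τ t).le hqζ]; ring
      _ ≤ (q - 1) * β t := hcond t ht.le
    rw [hheq t (by linarith)]
    nlinarith [nu_pos γ t]
  have hζτ : ζ τ = h τ := by
    rw [hζ τ le_rfl, intervalIntegral.integral_same, add_zero,
      mul_div_cancel_right₀ _ (nu_pos γ τ).ne']
  have hwτ : w τ < 0 := (hw_neg_iff τ le_rfl).2 (by rw [hζτ]; exact lt_mul_of_one_lt_left hhτ hq)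
  have hwc : ContinuousOn w (Ici τ) :=
    ((hhc.mono (Ici_subset_Ici.2 hτ.le)).mul (continuous_nu hγ).continuousOn).sub
      (continuous_const.mul
        (continuous_iff_continuousAt.2 fun t => (hZ t).continuousAt)).continuousOn
  intro t ht
  exact ((hw_neg_iff t ht).1 (neg_of_hasDerivAt_nonpos_of_neg hwc hw hwτ hw' t ht)).le

theorem stmt_12_general
    {H : Type*} [NormedAddCommGroup H] [InnerProductSpace ℂ H]
    (τ p : ℝ) (hτ : 0 < τ) (hp : 1 < p)
    (γ α β : ℝ → ℝ)
    (hγc : Continuous γ) (hβc : Continuous β)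
    (hα : ∀ t, 0 ≤ α t) (hβ : ∀ t, 0 ≤ β t)
    (u : ℝ → H) (u' : ℝ → H)
    (huc : ContinuousOn u (Ici (-τ)))
    (hud : ∀ t, 0 ≤ t → HasDerivWithinAt u (u' t) (Ici (0:ℝ)) t)
    (hnd : ∀ t, 0 ≤ t → DifferentiableWithinAt ℝ (fun s => ‖u s‖) (Ici (0:ℝ)) t)
    (huineq : ∀ t, 0 ≤ t → (⟪u t, u' t⟫).re ≤
      γ t * ‖u t‖ ^ 2 + α t * ‖u t‖ * ‖u (t - τ)‖ ^ p + β t * ‖u t‖)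
    (h h' : ℝ → ℝ)
    (hh0 : ∀ t, -τ ≤ t → 0 ≤ h t)
    (hhc : ContinuousOn h (Ici (-τ)))
    (hhd : ∀ t, 0 ≤ t → HasDerivWithinAt h (h' t) (Ici (0:ℝ)) t)
    (hheq : ∀ t, 0 ≤ t → h' t = γ t * h t + α t * h (t - τ) ^ p + β t)
    (hinit : ∀ t, -τ ≤ t → t ≤ 0 → h t = ‖u t‖)
    (hhτ : 0 < h τ)
    (q : ℝ) (hq : 1 < q)
    (ζ : ℝ → ℝ)
    (hζ : ∀ t, τ ≤ t →
      ζ t = (h τ * nu γ τ + ∫ ξ in τ..t, β ξ * nu γ ξ) / nu γ t)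
    (hcond : ∀ t, τ ≤ t → α t * sig γ τ t ^ p * (q * ζ t) ^ p ≤ (q - 1) * β t) :
    ∀ t, τ ≤ t → ‖u t‖ ≤ q * ζ t := by
  have hp0 : 0 ≤ p := by linarith
  intro t ht
  have hnorm := norm_le_of_delay_comparison (𝕜 := ℂ) hτ hp0 hγc hα huc hud hnd huineq
    (fun s hs => hh0 s (by linarith)) hhc hhd hheq hinit t (by linarith)
  have hest := le_mul_of_delay_bound hτ hp0 hq hγc hβc hα hβ hh0
    (hhc.mono (Ici_subset_Ici.2 (by linarith))) hhd hheq hhτ hζ hcond t ht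
  exact hnorm.trans hest

/-- Theorem 2.7 (Theorem 2), the estimate `‖u(t)‖ ≤ q ζ(t)` for `t ≥ τ`. -/
theorem stmt_12
    {H : Type*} [NormedAddCommGroup H] [InnerProductSpace ℂ H]
    (τ p : ℝ) (hτ : 0 < τ) (hp : 1 < p)
    (γ α β : ℝ → ℝ)
    (hγc : Continuous γ) (hαc : Continuous α) (hβc : Continuous β)
    (hα : ∀ t, 0 ≤ α t) (hβ : ∀ t, 0 ≤ β t)
    (u : ℝ → H) (u' : ℝ → H)
    (huc : ContinuousOn u (Ici (-τ)))
    (hud : ∀ t, 0 ≤ t → HasDerivWithinAt u (u' t) (Ici (0:ℝ)) t)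
    (hnd : ∀ t, 0 ≤ t → DifferentiableWithinAt ℝ (fun s => ‖u s‖) (Ici (0:ℝ)) t)
    (huineq : ∀ t, 0 ≤ t → (⟪u t, u' t⟫).re ≤
      γ t * ‖u t‖ ^ 2 + α t * ‖u t‖ * ‖u (t - τ)‖ ^ p + β t * ‖u t‖)
    (h h' : ℝ → ℝ)
    (hh0 : ∀ t, -τ ≤ t → 0 ≤ h t)
    (hhc : ContinuousOn h (Ici (-τ)))
    (hhd : ∀ t, 0 ≤ t → HasDerivWithinAt h (h' t) (Ici (0:ℝ)) t)
    (hheq : ∀ t, 0 ≤ t → h' t = γ t * h t + α t * h (t - τ) ^ p + β t)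
    (hinit : ∀ t, -τ ≤ t → t ≤ 0 → h t = ‖u t‖)
    (hhτ : 0 < h τ)
    (q : ℝ) (hq : 1 < q)
    (ζ : ℝ → ℝ)
    (hζ : ∀ t, τ ≤ t →
      ζ t = (h τ * nu γ τ + ∫ ξ in τ..t, β ξ * nu γ ξ) / nu γ t)
    (hcond : ∀ t, τ ≤ t → α t * sig γ τ t ^ p * (q * ζ t) ^ p ≤ (q - 1) * β t) :
    ∀ t, τ ≤ t → ‖u t‖ ≤ q * ζ t :=
  stmt_12_general τ p hτ hp γ α β hγc hβc hα hβ u u' huc hud hnd huineq h h' hh0 hhc hhd hheq hinit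
    hhτ q hq ζ hζ hcond
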